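/- Let A be a u-absorber with cycle C of length 2t+1 and vertex sequence (u, v₁, …, v_{t+1}, …, v_{2t}), and Berge paths P₁, …, P_{t−1} where Pᵢ joins v_{i+1} to v_{2t+1−i}, all edge sets disjoint and inner vertex sets of the paths pairwise disjoint. Then A contains two Berge paths from v₁ to v_{t+1}: one whose inner vertex set is V*(C) ∪ ⋃ᵢ V*(Pᵢ), and one whose inner vertex set is (V*(C) \ {u}) ∪ ⋃ᵢ V*(Pᵢ). -/

import Mathlib

/-!
The paths `Pᵢ` are the rungs of a ladder whose two rails are the arcs `v₂ … v_{t+1}` and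
`v_{2t} … v_{t+1}` of `C`, meeting at the apex `v_{t+1}`. Zig-zagging through it (climb a rung,
step along a rail to the next rung, climb that one backwards, …) gives a Berge path from either
foot `v₂` or `v_{2t}` to the apex that visits every rung vertex and uses each edge at most once.
Prefixing the cycle edge `v₁v₂` gives the path avoiding `u`, prefixing `v₁ u v_{2t}` the path
through `u`; every other vertex of `C` is an endpoint of some `Pᵢ`.
-/

open Finset

/-- A Berge path of length `k`. -/
def IsBergePath (n : ℕ) (E : Finset (Finset (Fin n))) (k : ℕ)
    (v : Fin (k + 1) → Fin n) (e : Fin k → Finset (Fin n)) : Prop :=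
  Function.Injective v ∧ Function.Injective e ∧ (∀ i, e i ∈ E) ∧
    ∀ i : Fin k, v i.castSucc ∈ e i ∧ v i.succ ∈ e i

/-- A Berge cycle on `k` vertices. -/
def IsBergeCycle (n : ℕ) (E : Finset (Finset (Fin n))) (k : ℕ) [NeZero k]
    (v : Fin k → Fin n) (e : Fin k → Finset (Fin n)) : Prop :=
  Function.Injective v ∧ Function.Injective e ∧ (∀ i, e i ∈ E) ∧
    ∀ i : Fin k, v i ∈ e i ∧ v (i + 1) ∈ e i

variable {α : Type*}

inductive IsBergeWalk : α → α → List α → List (Finset α) → Prop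
  | nil (x : α) : IsBergeWalk x x [x] []
  | cons {x y z : α} {e : Finset α} {vs : List α} {es : List (Finset α)} :
      x ∈ e → y ∈ e → IsBergeWalk y z vs es → IsBergeWalk x z (x :: vs) (e :: es)

namespace IsBergeWalk

variable {x y y' z : α} {f : Finset α} {vs vs' : List α} {es es' : List (Finset α)}

theorem append (h : IsBergeWalk x y vs es) (hy : y ∈ f) (hy' : y' ∈ f)
    (h' : IsBergeWalk y' z vs' es') : IsBergeWalk x z (vs ++ vs') (es ++ f :: es') := by
  induction h with
  | nil x => exact .cons hy hy' h'
  | cons hx hx' _ ih => exact .cons hx hx' (ih hy)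

theorem reverse (h : IsBergeWalk x y vs es) : IsBergeWalk y x vs.reverse es.reverse := by
  induction h with
  | nil x => exact .nil x
  | cons hx hx' _ ih => simpa using ih.append hx' hx (.nil _)

theorem ofFn {k : ℕ} {v : Fin (k + 1) → α} {e : Fin k → Finset α}
    (h : ∀ i : Fin k, v i.castSucc ∈ e i ∧ v i.succ ∈ e i) :
    IsBergeWalk (v 0) (v (Fin.last k)) (List.ofFn v) (List.ofFn e) := by
  induction k with
  | zero => simpa using .nil (v 0)
  | succ k ih =>
    rw [List.ofFn_succ (f := v), List.ofFn_succ (f := e), ← Fin.succ_last]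
    exact .cons (h 0).1 (h 0).2 (ih (v := fun i => v i.succ) (e := fun i => e i.succ)
      fun i => by simpa [← Fin.succ_castSucc] using h i.succ)

theorem exists_ofFn (h : IsBergeWalk x y vs es) :
    ∃ (k : ℕ) (v : Fin (k + 1) → α) (e : Fin k → Finset α),
      List.ofFn v = vs ∧ List.ofFn e = es ∧ v 0 = x ∧ v (Fin.last k) = y ∧
      ∀ i : Fin k, v i.castSucc ∈ e i ∧ v i.succ ∈ e i := by
  induction h with
  | nil x => exact ⟨0, ![x], ![], by simp, by simp, rfl, rfl, fun i => i.elim0⟩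
  | @cons x y z e vs es hx hy _ ih =>
    obtain ⟨k, v, e', rfl, rfl, rfl, rfl, hve⟩ := ih
    refine ⟨k + 1, Fin.cons x v, Fin.cons e e', by simp [List.ofFn_succ], by simp [List.ofFn_succ],
      rfl, by simp [← Fin.succ_last], Fin.cases ⟨hx, hy⟩ fun i => ?_⟩
    simpa [← Fin.succ_castSucc] using hve i

theorem exists_isBergePath {n : ℕ} {E : Finset (Finset (Fin n))} {x y : Fin n}
    {vs : List (Fin n)} {es : List (Finset (Fin n))} (h : IsBergeWalk x y vs es)
    (hvs : vs.Nodup) (hes : es.Nodup) (hE : ∀ e ∈ es, e ∈ E) :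
    ∃ (K : ℕ) (P : Fin (K + 1) → Fin n) (Q : Fin K → Finset (Fin n)),
      IsBergePath n E K P Q ∧ P 0 = x ∧ P (Fin.last K) = y ∧ (∀ i, Q i ∈ es) ∧
      Set.range P = {v | v ∈ vs} := by
  obtain ⟨K, P, Q, rfl, rfl, rfl, rfl, hPQ⟩ := h.exists_ofFn
  refine ⟨K, P, Q, ⟨List.nodup_ofFn.1 hvs, List.nodup_ofFn.1 hes,
    fun i => hE _ (List.mem_ofFn.2 ⟨i, rfl⟩), hPQ⟩, rfl, rfl,
    fun i => List.mem_ofFn.2 ⟨i, rfl⟩, Set.ext fun _ => List.mem_ofFn.symm⟩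

end IsBergeWalk

structure IsLadder (m : ℕ) (z : α) (a b : ℕ → α) (ea eb : ℕ → Finset α)
    (V : Fin m → List α) (F : Fin m → List (Finset α)) : Prop where
  rung : ∀ j : Fin m, IsBergeWalk (a j) (b j) (V j) (F j)
  rung_nodup : ∀ j : Fin m, (V j).Nodup ∧ (F j).Nodup
  rail_a : ∀ j < m, a j ∈ ea j ∧ a (j + 1) ∈ ea j
  rail_b : ∀ j < m, b j ∈ eb j ∧ b (j + 1) ∈ eb j
  top_a : a m = z
  top_b : b m = z
  apex_notMem : ∀ j : Fin m, z ∉ V j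
  disjoint_rungs : ∀ i j : Fin m, i ≠ j → (V i).Disjoint (V j)
  disjoint_rung_edges : ∀ i j : Fin m, i ≠ j → (F i).Disjoint (F j)
  rail_notMem : ∀ i < m, ∀ j : Fin m, ea i ∉ F j ∧ eb i ∉ F j
  injOn_rail_a : Set.InjOn ea (Set.Iio m)
  injOn_rail_b : Set.InjOn eb (Set.Iio m)
  rail_a_ne_rail_b : ∀ i < m, ∀ j < m, ea i ≠ eb j

namespace IsLadder

variable {m : ℕ} {z : α} {a b : ℕ → α} {ea eb : ℕ → Finset α}

theorem swap {V : Fin m → List α} {F : Fin m → List (Finset α)}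
    (h : IsLadder m z a b ea eb V F) :
    IsLadder m z b a eb ea (fun j => (V j).reverse) (fun j => (F j).reverse) where
  rung j := (h.rung j).reverse
  rung_nodup j := by simpa using h.rung_nodup j
  rail_a := h.rail_b
  rail_b := h.rail_a
  top_a := h.top_b
  top_b := h.top_a
  apex_notMem j := by simpa using h.apex_notMem j
  disjoint_rungs i j hij := by simpa using h.disjoint_rungs i j hij
  disjoint_rung_edges i j hij := by simpa using h.disjoint_rung_edges i j hij
  rail_notMem i hi j := by simpa [and_comm] using h.rail_notMem i hi j
  injOn_rail_a := h.injOn_rail_b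
  injOn_rail_b := h.injOn_rail_a
  rail_a_ne_rail_b i hi j hj := (h.rail_a_ne_rail_b j hj i hi).symm

theorem tail {V : Fin (m + 1) → List α} {F : Fin (m + 1) → List (Finset α)}
    (h : IsLadder (m + 1) z a b ea eb V F) :
    IsLadder m z (fun j => a (j + 1)) (fun j => b (j + 1)) (fun j => ea (j + 1))
      (fun j => eb (j + 1)) (fun j => V j.succ) (fun j => F j.succ) where
  rung j := h.rung j.succ
  rung_nodup j := h.rung_nodup j.succ
  rail_a j hj := h.rail_a (j + 1) (by omega)
  rail_b j hj := h.rail_b (j + 1) (by omega)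
  top_a := h.top_a
  top_b := h.top_b
  apex_notMem j := h.apex_notMem j.succ
  disjoint_rungs i j hij := h.disjoint_rungs _ _ (Fin.succ_injective _ |>.ne hij)
  disjoint_rung_edges i j hij := h.disjoint_rung_edges _ _ (Fin.succ_injective _ |>.ne hij)
  rail_notMem i hi j := h.rail_notMem (i + 1) (by omega) j.succ
  injOn_rail_a i hi j hj hij :=
    Nat.succ_injective (h.injOn_rail_a (Nat.succ_lt_succ hi) (Nat.succ_lt_succ hj) hij)
  injOn_rail_b i hi j hj hij :=
    Nat.succ_injective (h.injOn_rail_b (Nat.succ_lt_succ hi) (Nat.succ_lt_succ hj) hij)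
  rail_a_ne_rail_b i hi j hj := h.rail_a_ne_rail_b (i + 1) (by omega) (j + 1) (by omega)

/-- Climb rung `0`, cross to `b 1` along the rail edge `eb 0`, and continue in the remaining
ladder with its two sides swapped. -/
theorem exists_walk : ∀ {m : ℕ} {a b : ℕ → α} {ea eb : ℕ → Finset α}
    {V : Fin m → List α} {F : Fin m → List (Finset α)}, IsLadder m z a b ea eb V F →
    ∃ vs es, IsBergeWalk (a 0) z vs es ∧ vs.Nodup ∧ es.Nodup ∧
      (∀ x, x ∈ vs ↔ x = z ∨ ∃ j, x ∈ V j) ∧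
      ∀ e ∈ es, (∃ i < m, e = ea i ∨ e = eb i) ∨ ∃ j, e ∈ F j
  | 0, a, _, _, _, _, _, h => h.top_a ▸ ⟨[a 0], [], .nil _, by simp, by simp, by simp, by simp⟩
  | m + 1, a, b, ea, eb, V, F, h => by
    obtain ⟨vs, es, hwalk, hvs, hes, hmem, hedge⟩ := h.tail.swap.exists_walk
    have hb₀ := h.rail_b 0 m.succ_pos
    have hV : (V 0).Disjoint vs := fun x hx hx' => by
      rcases (hmem x).1 hx' with rfl | ⟨j, hj⟩
      · exact h.apex_notMem 0 hx
      · exact h.disjoint_rungs 0 j.succ (Fin.succ_ne_zero j).symm hx (List.mem_reverse.1 hj)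
    have hF : (eb 0 :: F 0).Disjoint es := fun e he he' => by
      rcases hedge e he' with ⟨i, hi, rfl | rfl⟩ | ⟨j, hj⟩ <;>
        rcases List.mem_cons.1 he with he | he
      · exact absurd (h.injOn_rail_b (Nat.succ_lt_succ hi) m.succ_pos he) (by omega)
      · exact (h.rail_notMem (i + 1) (by omega) 0).2 he
      · exact h.rail_a_ne_rail_b (i + 1) (by omega) 0 m.succ_pos he
      · exact (h.rail_notMem (i + 1) (by omega) 0).1 he
      · exact (h.rail_notMem 0 m.succ_pos j.succ).2 (he ▸ List.mem_reverse.1 hj)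
      · exact h.disjoint_rung_edges 0 j.succ (Fin.succ_ne_zero j).symm he (List.mem_reverse.1 hj)
    have hF₀ : (eb 0 :: F 0).Nodup :=
      List.nodup_cons.2 ⟨(h.rail_notMem 0 m.succ_pos 0).2, (h.rung_nodup 0).2⟩
    refine ⟨V 0 ++ vs, F 0 ++ eb 0 :: es, (h.rung 0).append hb₀.1 hb₀.2 hwalk,
      List.nodup_append'.2 ⟨(h.rung_nodup 0).1, hvs, hV⟩, ?_, fun x => ?_, fun e he => ?_⟩
    · rw [List.nodup_middle, ← List.cons_append]
      exact List.nodup_append'.2 ⟨hF₀, hes, hF⟩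
    · simp only [List.mem_append, hmem, List.mem_reverse, Fin.exists_fin_succ]
      tauto
    · simp only [List.mem_append, List.mem_cons] at he
      rcases he with he | rfl | he
      · exact .inr ⟨0, he⟩
      · exact .inl ⟨0, m.succ_pos, .inr rfl⟩
      · rcases hedge e he with ⟨i, hi, he | he⟩ | ⟨j, hj⟩
        · exact .inl ⟨i + 1, by omega, .inr he⟩
        · exact .inl ⟨i + 1, by omega, .inl he⟩
        · exact .inr ⟨j.succ, List.mem_reverse.1 hj⟩

theorem exists_walk_of_foot {V : Fin m → List α} {F : Fin m → List (Finset α)}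
    (h : IsLadder m z a b ea eb V F) {s : α} (hs : s = a 0 ∨ s = b 0) :
    ∃ vs es, IsBergeWalk s z vs es ∧ vs.Nodup ∧ es.Nodup ∧
      (∀ x, x ∈ vs ↔ x = z ∨ ∃ j, x ∈ V j) ∧
      ∀ e ∈ es, (∃ i < m, e = ea i ∨ e = eb i) ∨ ∃ j, e ∈ F j := by
  rcases hs with rfl | rfl
  · exact h.exists_walk
  · obtain ⟨vs, es, hw, hvs, hes, hmem, hedge⟩ := h.swap.exists_walk
    refine ⟨vs, es, hw, hvs, hes, by simpa using hmem, fun e he => ?_⟩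
    simpa [or_comm] using hedge e he

end IsLadder

open Fin.NatCast

/-- `w 0 = u` and `w i = vᵢ`; `p j` is the paper's `P_{j+1}`. Cycle positions are natural numbers
read modulo `2t+1`. -/
structure IsAbsorber (n : ℕ) (E : Finset (Finset (Fin n))) (t : ℕ)
    (w : Fin (2 * t + 1) → Fin n) (c : Fin (2 * t + 1) → Finset (Fin n))
    (k : Fin (t - 1) → ℕ) (p : (j : Fin (t - 1)) → Fin (k j + 1) → Fin n)
    (q : (j : Fin (t - 1)) → Fin (k j) → Finset (Fin n)) : Prop where
  cycle : IsBergeCycle n E (2 * t + 1) w c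
  path : ∀ j, IsBergePath n E (k j) (p j) (q j)
  path_start : ∀ j : Fin (t - 1), p j 0 = w ((j + 2 : ℕ) : Fin (2 * t + 1))
  path_end : ∀ j : Fin (t - 1), p j (Fin.last (k j)) = w ((2 * t - j : ℕ) : Fin (2 * t + 1))
  path_disjoint : ∀ j j', j ≠ j' → ∀ a b, p j a ≠ p j' b
  path_inter_cycle : ∀ j a b, p j a = w b → a = 0 ∨ a = Fin.last (k j)
  path_edge_ne_cycle_edge : ∀ j a b, q j a ≠ c b
  path_edges_disjoint : ∀ j j', j ≠ j' → ∀ a b, q j a ≠ q j' b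

namespace IsAbsorber

variable {n t : ℕ} {E : Finset (Finset (Fin n))}
  {w : Fin (2 * t + 1) → Fin n} {c : Fin (2 * t + 1) → Finset (Fin n)} {k : Fin (t - 1) → ℕ}
  {p : (j : Fin (t - 1)) → Fin (k j + 1) → Fin n}
  {q : (j : Fin (t - 1)) → Fin (k j) → Finset (Fin n)}

theorem mem_cycle_edge (hA : IsAbsorber n E t w c k p q) (i : ℕ) :
    w i ∈ c i ∧ w (i + 1 : ℕ) ∈ c i :=
  (Nat.cast_succ (R := Fin (2 * t + 1)) i) ▸ hA.cycle.2.2.2 i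

theorem cycle_vertex_injOn (hA : IsAbsorber n E t w c k p q) {i i' : ℕ} (hi : i < 2 * t + 1)
    (hi' : i' < 2 * t + 1) (h : w i = w i') : i = i' :=
  CharP.natCast_injOn_Iio _ _ hi hi' (hA.cycle.1 h)

theorem cycle_edge_injOn (hA : IsAbsorber n E t w c k p q) {i i' : ℕ} (hi : i < 2 * t + 1)
    (hi' : i' < 2 * t + 1) (h : c i = c i') : i = i' :=
  CharP.natCast_injOn_Iio _ _ hi hi' (hA.cycle.2.1 h)

theorem cycle_vertex_ne_zero (hA : IsAbsorber n E t w c k p q) {i : ℕ} (hi : 1 ≤ i)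
    (hi' : i ≤ 2 * t) : w i ≠ w 0 := fun h => by
  have := hA.cycle_vertex_injOn (i' := 0) (by omega) (by omega) (h.trans (by rw [Nat.cast_zero]))
  omega

theorem eq_of_path_eq_cycle_vertex (hA : IsAbsorber n E t w c k p q) {j : Fin (t - 1)}
    {a : Fin (k j + 1)} {i : ℕ} (hi : i < 2 * t + 1) (h : p j a = w i) :
    i = j + 2 ∨ i = 2 * t - j := by
  rcases hA.path_inter_cycle j a _ h with rfl | rfl
  · exact .inl (hA.cycle_vertex_injOn hi (by omega) (h.symm.trans (hA.path_start j)))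
  · exact .inr (hA.cycle_vertex_injOn hi (by omega) (h.symm.trans (hA.path_end j)))

theorem isLadder (hA : IsAbsorber n E t w c k p q) (ht : 1 ≤ t) :
    IsLadder (t - 1) (w (t + 1 : ℕ)) (fun j => w (j + 2 : ℕ)) (fun j => w (2 * t - j : ℕ))
      (fun j => c (j + 2 : ℕ)) (fun j => c (2 * t - 1 - j : ℕ))
      (fun j => List.ofFn (p j)) (fun j => List.ofFn (q j)) where
  rung j := hA.path_start j ▸ hA.path_end j ▸ IsBergeWalk.ofFn (hA.path j).2.2.2
  rung_nodup j := ⟨List.nodup_ofFn.2 (hA.path j).1, List.nodup_ofFn.2 (hA.path j).2.1⟩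
  rail_a j _ := by simpa [add_right_comm] using hA.mem_cycle_edge (j + 2)
  rail_b j hj := by
    obtain ⟨h₁, h₂⟩ := hA.mem_cycle_edge (2 * t - 1 - j)
    rw [show 2 * t - 1 - j + 1 = 2 * t - j by omega] at h₂
    rw [show 2 * t - (j + 1) = 2 * t - 1 - j by omega]
    exact ⟨h₂, h₁⟩
  top_a := by rw [show t - 1 + 2 = t + 1 by omega]
  top_b := by rw [show 2 * t - (t - 1) = t + 1 by omega]
  apex_notMem j h := by
    obtain ⟨a, ha⟩ := List.mem_ofFn.1 h
    have := hA.eq_of_path_eq_cycle_vertex (by omega) ha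
    omega
  disjoint_rungs i j hij x hx hx' := by
    obtain ⟨a, rfl⟩ := List.mem_ofFn.1 hx
    obtain ⟨b, hb⟩ := List.mem_ofFn.1 hx'
    exact hA.path_disjoint i j hij a b hb.symm
  disjoint_rung_edges i j hij e he he' := by
    obtain ⟨a, rfl⟩ := List.mem_ofFn.1 he
    obtain ⟨b, hb⟩ := List.mem_ofFn.1 he'
    exact hA.path_edges_disjoint i j hij a b hb.symm
  rail_notMem i _ j := by
    constructor <;> intro h <;> obtain ⟨a, ha⟩ := List.mem_ofFn.1 h <;>
      exact hA.path_edge_ne_cycle_edge j a _ ha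
  injOn_rail_a i (hi : i < t - 1) i' (hi' : i' < t - 1) h := by
    have := hA.cycle_edge_injOn (by omega) (by omega) h
    omega
  injOn_rail_b i (hi : i < t - 1) i' (hi' : i' < t - 1) h := by
    have := hA.cycle_edge_injOn (by omega) (by omega) h
    omega
  rail_a_ne_rail_b i hi i' hi' h := by
    have := hA.cycle_edge_injOn (by omega) (by omega) h
    omega

theorem path_ne_cycle_vertex (hA : IsAbsorber n E t w c k p q) {i : ℕ} (hi : i ≤ 1 ∨ i = t + 1)
    (j : Fin (t - 1)) (a : Fin (k j + 1)) : p j a ≠ w i := fun h => by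
  have := j.isLt
  have := hA.eq_of_path_eq_cycle_vertex (by omega) h
  omega

theorem cycle_vertex_cases (hA : IsAbsorber n E t w c k p q) (i : Fin (2 * t + 1)) :
    w i = w 0 ∨ w i = w (1 : ℕ) ∨ w i = w (t + 1 : ℕ) ∨ ∃ j a, p j a = w i := by
  obtain ⟨i, hi⟩ := i
  rw [show w ⟨i, hi⟩ = w (i : ℕ) from congrArg w (Fin.cast_val_eq_self _).symm]
  rcases show i = 0 ∨ i = 1 ∨ i = t + 1 ∨ (2 ≤ i ∧ i ≤ t) ∨ (t + 2 ≤ i ∧ i ≤ 2 * t) by omega with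
    rfl | rfl | rfl | hi' | hi'
  · simp
  · simp
  · simp
  · refine .inr <| .inr <| .inr ⟨⟨i - 2, by omega⟩, 0, ?_⟩
    rw [hA.path_start, show i - 2 + 2 = i by omega]
  · refine .inr <| .inr <| .inr ⟨⟨2 * t - i, by omega⟩, Fin.last _, ?_⟩
    rw [hA.path_end, show 2 * t - (2 * t - i) = i by omega]

theorem range_union_iUnion_range (hA : IsAbsorber n E t w c k p q) :
    Set.range w ∪ ⋃ j, Set.range (p j) =
      {x | x = w (1 : ℕ) ∨ x = w 0 ∨ x = w (t + 1 : ℕ) ∨ ∃ j a, p j a = x} := by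
  ext x
  simp only [Set.mem_union, Set.mem_range, Set.mem_iUnion, Set.mem_ofPred_eq]
  constructor
  · rintro (⟨i, rfl⟩ | ⟨j, a, rfl⟩)
    · rcases hA.cycle_vertex_cases i with h | h | h | h <;> tauto
    · exact .inr (.inr (.inr ⟨j, a, rfl⟩))
  · rintro (rfl | rfl | rfl | ⟨j, a, rfl⟩)
    exacts [.inl ⟨_, rfl⟩, .inl ⟨_, rfl⟩, .inl ⟨_, rfl⟩, .inr ⟨j, a, rfl⟩]

theorem range_sdiff_union_iUnion_range (hA : IsAbsorber n E t w c k p q) (ht : 1 ≤ t) :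
    (Set.range w \ {w 0}) ∪ ⋃ j, Set.range (p j) =
      {x | x = w (1 : ℕ) ∨ x = w (t + 1 : ℕ) ∨ ∃ j a, p j a = x} := by
  have hU : w 0 ∉ ⋃ j, Set.range (p j) := by
    simp only [Set.mem_iUnion, Set.mem_range, not_exists]
    exact fun j a => by simpa using hA.path_ne_cycle_vertex (i := 0) (.inl zero_le_one) j a
  rw [← Set.sdiff_singleton_eq_self hU, ← Set.union_sdiff_distrib, hA.range_union_iUnion_range]
  ext x
  simp only [Set.mem_sdiff, Set.mem_ofPred_eq, Set.mem_singleton_iff]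
  have h₁ := hA.cycle_vertex_ne_zero le_rfl (by omega)
  have hₜ := hA.cycle_vertex_ne_zero (i := t + 1) (by omega) (by omega)
  constructor
  · rintro ⟨h | h | h | h, hx⟩ <;> tauto
  · rintro (rfl | rfl | ⟨j, a, rfl⟩)
    · exact ⟨.inl rfl, h₁⟩
    · exact ⟨.inr (.inr (.inl rfl)), hₜ⟩
    · exact ⟨.inr (.inr (.inr ⟨j, a, rfl⟩)), fun h => hU (Set.mem_iUnion.2 ⟨j, a, h⟩)⟩

theorem edge_mem (hA : IsAbsorber n E t w c k p q) {e : Finset (Fin n)}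
    (he : e ∈ Set.range c ∪ ⋃ j, Set.range (q j)) : e ∈ E := by
  rcases he with ⟨i, rfl⟩ | he
  · exact hA.cycle.2.2.1 i
  · obtain ⟨j, a, rfl⟩ := Set.mem_iUnion.1 he
    exact (hA.path j).2.2.1 a

theorem exists_walk_of_foot (hA : IsAbsorber n E t w c k p q) (ht : 1 ≤ t) {s : Fin n}
    (hs : s = w (2 : ℕ) ∨ s = w (2 * t : ℕ)) :
    ∃ vs es, IsBergeWalk s (w (t + 1 : ℕ)) vs es ∧ vs.Nodup ∧ es.Nodup ∧
      (∀ x, x ∈ vs ↔ x = w (t + 1 : ℕ) ∨ ∃ j a, p j a = x) ∧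
      (∀ e ∈ es, e ∈ Set.range c ∪ ⋃ j, Set.range (q j)) ∧
      (∀ i : ℕ, i ≤ 1 → w i ∉ vs) ∧ ∀ i : ℕ, i ≤ 1 ∨ i = 2 * t → c i ∉ es := by
  obtain ⟨vs, es, hw, hvs, hes, hmem, hedge⟩ := (hA.isLadder ht).exists_walk_of_foot hs
  have hmem' : ∀ x, x ∈ vs ↔ x = w (t + 1 : ℕ) ∨ ∃ j a, p j a = x := by
    simpa only [List.mem_ofFn] using hmem
  refine ⟨vs, es, hw, hvs, hes, hmem', fun e he => ?_, fun i hi h => ?_, fun i hi h => ?_⟩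
  · rcases hedge e he with ⟨i, -, rfl | rfl⟩ | ⟨j, hj⟩
    · exact .inl ⟨_, rfl⟩
    · exact .inl ⟨_, rfl⟩
    · exact .inr (Set.mem_iUnion.2 ⟨j, List.mem_ofFn.1 hj⟩)
  · rcases (hmem' _).1 h with h | ⟨j, a, h⟩
    · have := hA.cycle_vertex_injOn (by omega) (by omega) h
      omega
    · exact hA.path_ne_cycle_vertex (.inl hi) j a h
  · rcases hedge _ h with ⟨i', hi', hc | hc⟩ | ⟨j, hj⟩
    · have := hA.cycle_edge_injOn (by omega) (by omega) hc
      omega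
    · have := hA.cycle_edge_injOn (by omega) (by omega) hc
      omega
    · obtain ⟨a, ha⟩ := List.mem_ofFn.1 hj
      exact hA.path_edge_ne_cycle_edge j a _ ha

theorem exists_bergePath_avoiding (hA : IsAbsorber n E t w c k p q) (ht : 1 ≤ t) :
    ∃ (K : ℕ) (P : Fin (K + 1) → Fin n) (Q : Fin K → Finset (Fin n)),
      IsBergePath n E K P Q ∧ P 0 = w (1 : ℕ) ∧ P (Fin.last K) = w (t + 1 : ℕ) ∧
      (∀ i, Q i ∈ Set.range c ∪ ⋃ j, Set.range (q j)) ∧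
      Set.range P = (Set.range w \ {w 0}) ∪ ⋃ j, Set.range (p j) := by
  obtain ⟨vs, es, hw, hvs, hes, hmem, hedge, hw_notMem, hc_notMem⟩ :=
    hA.exists_walk_of_foot ht (.inl rfl)
  have hc₁ := hA.mem_cycle_edge 1
  have hedge' : ∀ e ∈ c (1 : ℕ) :: es, e ∈ Set.range c ∪ ⋃ j, Set.range (q j) :=
    List.forall_mem_cons.2 ⟨.inl ⟨_, rfl⟩, hedge⟩
  obtain ⟨K, P, Q, hPQ, h0, hK, hQ, hP⟩ := (hw.cons hc₁.1 hc₁.2).exists_isBergePath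
    (List.nodup_cons.2 ⟨hw_notMem 1 le_rfl, hvs⟩)
    (List.nodup_cons.2 ⟨hc_notMem 1 (.inl le_rfl), hes⟩) fun e he => hA.edge_mem (hedge' e he)
  refine ⟨K, P, Q, hPQ, h0, hK, fun i => hedge' _ (hQ i), ?_⟩
  rw [hP, hA.range_sdiff_union_iUnion_range ht]
  ext x
  simp only [Set.mem_ofPred_eq, List.mem_cons, hmem]

theorem exists_bergePath_through (hA : IsAbsorber n E t w c k p q) (ht : 1 ≤ t) :
    ∃ (K : ℕ) (P : Fin (K + 1) → Fin n) (Q : Fin K → Finset (Fin n)),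
      IsBergePath n E K P Q ∧ P 0 = w (1 : ℕ) ∧ P (Fin.last K) = w (t + 1 : ℕ) ∧
      (∀ i, Q i ∈ Set.range c ∪ ⋃ j, Set.range (q j)) ∧
      Set.range P = Set.range w ∪ ⋃ j, Set.range (p j) := by
  obtain ⟨vs, es, hw, hvs, hes, hmem, hedge, hw_notMem, hc_notMem⟩ :=
    hA.exists_walk_of_foot ht (.inr rfl)
  have hc₀ := hA.mem_cycle_edge 0
  have hc₂ₜ := hA.mem_cycle_edge (2 * t)
  rw [show ((2 * t + 1 : ℕ) : Fin (2 * t + 1)) = (0 : ℕ) by simp] at hc₂ₜ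
  have hedge' : ∀ e ∈ c (0 : ℕ) :: c (2 * t : ℕ) :: es, e ∈ Set.range c ∪ ⋃ j, Set.range (q j) :=
    List.forall_mem_cons.2 ⟨.inl ⟨_, rfl⟩, List.forall_mem_cons.2 ⟨.inl ⟨_, rfl⟩, hedge⟩⟩
  have hc₀₂ₜ : c (0 : ℕ) ≠ c (2 * t : ℕ) := fun h => by
    have := hA.cycle_edge_injOn (by omega) (by omega) h
    omega
  have hw₀₁ : w (1 : ℕ) ≠ w (0 : ℕ) := fun h => by
    have := hA.cycle_vertex_injOn (by omega) (by omega) h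
    omega
  obtain ⟨K, P, Q, hPQ, h0, hK, hQ, hP⟩ :=
    (hw.cons hc₂ₜ.2 hc₂ₜ.1 |>.cons hc₀.2 hc₀.1).exists_isBergePath
      (List.nodup_cons.2 ⟨fun h => (List.mem_cons.1 h).elim hw₀₁ (hw_notMem 1 le_rfl),
        List.nodup_cons.2 ⟨hw_notMem 0 zero_le_one, hvs⟩⟩)
      (List.nodup_cons.2 ⟨fun h => (List.mem_cons.1 h).elim hc₀₂ₜ (hc_notMem 0 (.inl zero_le_one)),
        List.nodup_cons.2 ⟨hc_notMem (2 * t) (.inr rfl), hes⟩⟩)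
      fun e he => hA.edge_mem (hedge' e he)
  refine ⟨K, P, Q, hPQ, h0, hK, fun i => hedge' _ (hQ i), ?_⟩
  rw [hP, hA.range_union_iUnion_range]
  ext x
  simp only [Set.mem_ofPred_eq, List.mem_cons, hmem, Nat.cast_zero, zero_add]

end IsAbsorber

/-- A `u`-absorber: a Berge cycle `C` of odd length `2t+1` with vertex
sequence `(u = w 0, v₁ = w 1, …, v_{2t} = w 2t)`, together with Berge paths
`P₀, …, P_{t-2}` (0-indexed; `P_j` joins `v_{j+2} = w (j+2)` to
`v_{2t-j} = w (2t-j)`), with pairwise disjoint inner vertex sets meeting the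
cycle only in their endpoints, and all edge sets pairwise disjoint. Then the
absorber contains two Berge paths from `v₁ = w 1` to `v_{t+1} = w (t+1)`:
one whose vertex set is `V*(C) ∪ ⋃ⱼ V*(Pⱼ)` and one whose vertex set is
`(V*(C) \ {u}) ∪ ⋃ⱼ V*(Pⱼ)`, both using only edges of the absorber. -/
theorem stmt10 (n t : ℕ) (ht : 1 ≤ t)
    (E : Finset (Finset (Fin n)))
    (u : Fin n)
    (w : Fin (2 * t + 1) → Fin n) (c : Fin (2 * t + 1) → Finset (Fin n))
    (hC : IsBergeCycle n E (2 * t + 1) w c) (hu : w 0 = u)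
    (k : Fin (t - 1) → ℕ)
    (p : (j : Fin (t - 1)) → Fin (k j + 1) → Fin n)
    (q : (j : Fin (t - 1)) → Fin (k j) → Finset (Fin n))
    (hP : ∀ j, IsBergePath n E (k j) (p j) (q j))
    (hends : ∀ j : Fin (t - 1),
      p j 0 = w ⟨j.val + 2, by have := j.isLt; omega⟩ ∧
      p j (Fin.last (k j)) = w ⟨2 * t - j.val, by omega⟩)
    (hinnerdisj : ∀ j j' : Fin (t - 1), j ≠ j' → ∀ a b, p j a ≠ p j' b)
    (hcycdisj : ∀ j : Fin (t - 1), ∀ a : Fin (k j + 1), ∀ b,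
      p j a = w b → a = 0 ∨ a = Fin.last (k j))
    (hedgedisj₁ : ∀ j a b, q j a ≠ c b)
    (hedgedisj₂ : ∀ j j' : Fin (t - 1), j ≠ j' → ∀ a b, q j a ≠ q j' b) :
    (∃ (K : ℕ) (P : Fin (K + 1) → Fin n) (Q : Fin K → Finset (Fin n)),
      IsBergePath n E K P Q ∧
      P 0 = w ⟨1, by omega⟩ ∧ P (Fin.last K) = w ⟨t + 1, by omega⟩ ∧
      (∀ i, Q i ∈ Set.range c ∪ ⋃ j, Set.range (q j)) ∧
      Set.range P = Set.range w ∪ ⋃ j, Set.range (p j)) ∧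
    (∃ (K : ℕ) (P : Fin (K + 1) → Fin n) (Q : Fin K → Finset (Fin n)),
      IsBergePath n E K P Q ∧
      P 0 = w ⟨1, by omega⟩ ∧ P (Fin.last K) = w ⟨t + 1, by omega⟩ ∧
      (∀ i, Q i ∈ Set.range c ∪ ⋃ j, Set.range (q j)) ∧
      Set.range P = (Set.range w \ {u}) ∪ ⋃ j, Set.range (p j)) := by
  have hA : IsAbsorber n E t w c k p q :=
    { cycle := hC
      path := hP
      path_start := fun j => (hends j).1.trans (congrArg w (Fin.cast_val_eq_self _).symm)
      path_end := fun j => (hends j).2.trans (congrArg w (Fin.cast_val_eq_self _).symm)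
      path_disjoint := hinnerdisj
      path_inter_cycle := hcycdisj
      path_edge_ne_cycle_edge := hedgedisj₁
      path_edges_disjoint := hedgedisj₂ }
  rw [← hu, ← Fin.cast_val_eq_self ⟨1, _⟩, ← Fin.cast_val_eq_self ⟨t + 1, _⟩]
  exact ⟨hA.exists_bergePath_through ht, hA.exists_bergePath_avoiding ht⟩
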